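/- arXiv:2104.11549 — 3 statements merged into one kernel-verified Lean document; each statement's English description precedes it below -/
import Mathlib

section
/- (Craig's representation of the Q-function) For every real number x ≥ 0, Q(x) = (1/π) ∫_0^{π/2} exp(-x²/(2 sin²θ)) dθ. -/
open Real MeasureTheory

/-- The Gaussian Q-function: `Q x = (1/√(2π)) ∫_x^∞ exp(-u²/2) du`. -/
noncomputable def gaussQ (x : ℝ) : ℝ :=
  (Real.sqrt (2 * Real.pi))⁻¹ * ∫ u in Set.Ioi x, Real.exp (-u ^ 2 / 2)

/-!
After the reflection `θ ↦ π/2 - θ`, write `exp (-x²/(2 cos²φ)) = 1 - ∫₀ˣ ρ_φ(y) dy`, where `ρ_φ`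
is the Rayleigh density with `σ = cos φ`. Exchanging the order of integration, the substitution
`φ = arctan t` gives `∫₀^{π/2} ρ_φ(y) dφ = y e^{-y²/2} ∫₀^∞ e^{-(yt)²/2} dt = √(2π)/2 · e^{-y²/2}`,
so the right-hand side is `1/2 - (2π)^{-1/2} ∫₀ˣ e^{-y²/2} dy = Q(x)`.
-/

open Set

lemma integrable_exp_neg_sq_div_two : Integrable fun t : ℝ => exp (-t ^ 2 / 2) := by
  convert integrable_exp_neg_mul_sq (by norm_num : (0 : ℝ) < 1 / 2) using 4
  ring

lemma integral_Ioi_zero_exp_neg_sq_div_two :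
    ∫ t in Ioi (0 : ℝ), exp (-t ^ 2 / 2) = √(2 * π) / 2 := by
  convert integral_gaussian_Ioi (1 / 2) using 4 <;> ring

lemma image_arctan_Ioi_zero : arctan '' Ioi 0 = Ioo 0 (π / 2) := by
  ext φ
  constructor
  · rintro ⟨t, ht, rfl⟩
    exact ⟨arctan_pos.2 ht, arctan_lt_pi_div_two t⟩
  · rintro ⟨h0, hπ⟩
    exact ⟨tan φ, tan_pos_of_pos_of_lt_pi_div_two h0 hπ, arctan_tan (by linarith) hπ⟩

lemma integral_Ioo_zero_pi_div_two_eq_integral_Ioi_comp_arctan {E : Type*}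
    [NormedAddCommGroup E] [NormedSpace ℝ E] (g : ℝ → E) :
    ∫ φ in Ioo 0 (π / 2), g φ = ∫ t in Ioi 0, (1 + t ^ 2)⁻¹ • g (arctan t) := by
  rw [← image_arctan_Ioi_zero, integral_image_eq_integral_abs_deriv_smul measurableSet_Ioi
    (fun t _ => (hasDerivAt_arctan t).hasDerivWithinAt) arctan_strictMono.injective.injOn]
  refine setIntegral_congr_fun measurableSet_Ioi fun t _ => ?_
  rw [abs_of_pos (by positivity), one_div]

/-- The Rayleigh density with scale parameter `σ² = s`. -/
noncomputable def rayleighDensity (s y : ℝ) : ℝ := y / s * exp (-y ^ 2 / (2 * s))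

lemma rayleighDensity_nonneg {s y : ℝ} (hs : 0 ≤ s) (hy : 0 ≤ y) : 0 ≤ rayleighDensity s y := by
  unfold rayleighDensity; positivity

lemma continuous_rayleighDensity (s : ℝ) : Continuous (rayleighDensity s) := by
  unfold rayleighDensity; fun_prop

lemma hasDerivAt_neg_exp_neg_sq_div {s : ℝ} (hs : s ≠ 0) (y : ℝ) :
    HasDerivAt (fun y => -exp (-y ^ 2 / (2 * s))) (rayleighDensity s y) y := by
  refine (((hasDerivAt_pow 2 y).fun_neg.div_const (2 * s)).exp).neg.congr_deriv ?_
  rw [rayleighDensity]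
  field_simp
  ring_nf

lemma intervalIntegral_rayleighDensity {s : ℝ} (hs : s ≠ 0) (x : ℝ) :
    ∫ y in 0..x, rayleighDensity s y = 1 - exp (-x ^ 2 / (2 * s)) := by
  rw [intervalIntegral.integral_eq_sub_of_hasDerivAt
    (fun y _ => hasDerivAt_neg_exp_neg_sq_div hs y)
    ((continuous_rayleighDensity s).intervalIntegrable 0 x)]
  norm_num
  ring

lemma rayleighDensity_cos_sq_arctan (y t : ℝ) :
    (1 + t ^ 2)⁻¹ • rayleighDensity (cos (arctan t) ^ 2) y
      = exp (-y ^ 2 / 2) * (y * exp (-(y * t) ^ 2 / 2)) := by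
  have hexp : exp (-y ^ 2 / (2 * (1 / (1 + t ^ 2))))
      = exp (-y ^ 2 / 2) * exp (-(y * t) ^ 2 / 2) := by
    rw [← exp_add]
    field_simp
    ring_nf
  rw [cos_sq_arctan, rayleighDensity, smul_eq_mul, hexp]
  field_simp

lemma integral_rayleighDensity_cos_sq {y : ℝ} (hy : 0 < y) :
    ∫ φ in Ioo 0 (π / 2), rayleighDensity (cos φ ^ 2) y = √(2 * π) / 2 * exp (-y ^ 2 / 2) := by
  rw [integral_Ioo_zero_pi_div_two_eq_integral_Ioi_comp_arctan]
  simp_rw [rayleighDensity_cos_sq_arctan]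
  rw [integral_const_mul, integral_const_mul,
    integral_comp_mul_left_Ioi (fun u => exp (-u ^ 2 / 2)) 0 hy, mul_zero,
    integral_Ioi_zero_exp_neg_sq_div_two, smul_eq_mul]
  field_simp

lemma exp_neg_sq_div_le_one (x : ℝ) {s : ℝ} (hs : 0 ≤ s) : exp (-x ^ 2 / (2 * s)) ≤ 1 := by
  rw [exp_le_one_iff]
  exact div_nonpos_of_nonpos_of_nonneg (neg_nonpos.2 (sq_nonneg x)) (by positivity)

lemma integrableOn_exp_neg_sq_div_cos_sq (x : ℝ) :
    IntegrableOn (fun φ => exp (-x ^ 2 / (2 * cos φ ^ 2))) (Ioo 0 (π / 2)) := by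
  refine Integrable.of_bound (by fun_prop : Measurable _).aestronglyMeasurable 1
    (ae_of_all _ fun φ => ?_)
  rw [norm_of_nonneg (exp_pos _).le]
  exact exp_neg_sq_div_le_one x (sq_nonneg _)

lemma setIntegral_Ioc_rayleighDensity {s x : ℝ} (hs : s ≠ 0) (hx : 0 ≤ x) :
    ∫ y in Ioc 0 x, rayleighDensity s y = 1 - exp (-x ^ 2 / (2 * s)) := by
  rw [← intervalIntegral.integral_of_le hx, intervalIntegral_rayleighDensity hs]

lemma cos_sq_pos_of_mem_Ioo {φ : ℝ} (hφ : φ ∈ Ioo 0 (π / 2)) : 0 < cos φ ^ 2 :=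
  pow_pos (cos_pos_of_mem_Ioo ⟨by linarith [hφ.1, pi_pos], hφ.2⟩) 2

lemma integrable_rayleighDensity_cos_sq {x : ℝ} (hx : 0 ≤ x) :
    Integrable (Function.uncurry fun φ y => rayleighDensity (cos φ ^ 2) y)
      ((volume.restrict (Ioo 0 (π / 2))).prod (volume.restrict (Ioc 0 x))) := by
  have hmeas : AEStronglyMeasurable (Function.uncurry fun φ y => rayleighDensity (cos φ ^ 2) y)
      ((volume.restrict (Ioo 0 (π / 2))).prod (volume.restrict (Ioc 0 x))) := by
    refine Measurable.aestronglyMeasurable ?_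
    unfold rayleighDensity
    fun_prop
  refine (integrable_prod_iff hmeas).2
    ⟨ae_of_all _ fun φ => (continuous_rayleighDensity (cos φ ^ 2)).integrableOn_Ioc, ?_⟩
  refine Integrable.of_bound hmeas.norm.integral_prod_right' 1 ?_
  filter_upwards [ae_restrict_mem measurableSet_Ioo] with φ hφ
  have hcos := cos_sq_pos_of_mem_Ioo hφ
  have hnorm : ∫ y in Ioc 0 x, ‖rayleighDensity (cos φ ^ 2) y‖
      = 1 - exp (-x ^ 2 / (2 * cos φ ^ 2)) := by
    rw [← setIntegral_Ioc_rayleighDensity hcos.ne' hx]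
    exact setIntegral_congr_fun measurableSet_Ioc fun y hy =>
      norm_of_nonneg (rayleighDensity_nonneg hcos.le hy.1.le)
  simp only [Function.uncurry_apply_pair, hnorm]
  rw [norm_of_nonneg (sub_nonneg.2 (exp_neg_sq_div_le_one x hcos.le))]
  linarith [exp_pos (-x ^ 2 / (2 * cos φ ^ 2))]

lemma integral_exp_neg_sq_div_cos_sq {x : ℝ} (hx : 0 ≤ x) :
    ∫ φ in Ioo 0 (π / 2), exp (-x ^ 2 / (2 * cos φ ^ 2))
      = π / 2 - √(2 * π) / 2 * ∫ y in 0..x, exp (-y ^ 2 / 2) := by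
  have hswap := integral_integral_swap (integrable_rayleighDensity_cos_sq hx)
  rw [setIntegral_congr_fun measurableSet_Ioo fun φ hφ =>
      setIntegral_Ioc_rayleighDensity (cos_sq_pos_of_mem_Ioo hφ).ne' hx,
    setIntegral_congr_fun measurableSet_Ioc fun y hy => integral_rayleighDensity_cos_sq hy.1,
    integral_sub (integrable_const 1) (integrableOn_exp_neg_sq_div_cos_sq x), integral_const_mul,
    setIntegral_const, volume_real_Ioo_of_le (by positivity), ← intervalIntegral.integral_of_le hx]
    at hswap
  simp only [sub_zero, smul_eq_mul, mul_one] at hswap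
  linarith

/-- Craig's representation of the Q-function. -/
theorem gaussQ_craig (x : ℝ) (hx : 0 ≤ x) :
    gaussQ x =
      (1 / Real.pi) * ∫ θ in (0 : ℝ)..(Real.pi / 2),
        Real.exp (-x ^ 2 / (2 * Real.sin θ ^ 2)) := by
  have htail : ∫ u in Ioi x, exp (-u ^ 2 / 2) = √(2 * π) / 2 - ∫ y in 0..x, exp (-y ^ 2 / 2) := by
    rw [← integral_Ioi_zero_exp_neg_sq_div_two, ← intervalIntegral.integral_Ioi_sub_Ioi
      integrable_exp_neg_sq_div_two.integrableOn hx, sub_sub_cancel]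
  have hreflect : ∫ θ in (0 : ℝ)..π / 2, exp (-x ^ 2 / (2 * sin θ ^ 2))
      = ∫ φ in Ioo 0 (π / 2), exp (-x ^ 2 / (2 * cos φ ^ 2)) := by
    simp_rw [← cos_pi_div_two_sub]
    rw [intervalIntegral.integral_comp_sub_left (fun φ => exp (-x ^ 2 / (2 * cos φ ^ 2))),
      sub_self, sub_zero, intervalIntegral.integral_of_le (by positivity),
      integral_Ioc_eq_integral_Ioo]
  rw [gaussQ, htail, hreflect, integral_exp_neg_sq_div_cos_sq hx]
  generalize ∫ y in 0..x, exp (-y ^ 2 / 2) = J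
  have hsqrt : √(2 * π) ^ 2 = 2 * π := sq_sqrt (by positivity)
  field_simp
  linear_combination J * hsqrt
end

section
/- For every real ρ > 0 and every integer m ≥ 1, ∫_0^{π/2} (1 + ρ/sin²θ)^{-m} dθ ≥ (√π / (2√(m + 1/2))) · (1 + ρ)^{-m}, where the integrand is extended by the value 0 at θ = 0. -/
/-!
Since `sin² θ ≤ 1`, the integrand is at least `(sin² θ / (1 + ρ))^m`, so it suffices to bound
`I n = ∫_0^{π/2} sin^n` from below at `n = 2m`. Integration by parts gives
`(n + 2) I (n + 2) = (n + 1) I n`, whence `(n + 1) I n I (n + 1) = π / 2` for all `n`; as `I` is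
antitone, `I n ^ 2 ≥ π / (2 (n + 1))`, which at `n = 2m` is the claimed constant.
-/

open Real MeasureTheory Set intervalIntegral

theorem integral_sin_pow_succ_succ_zero_pi_div_two (n : ℕ) :
    ∫ x in 0..π / 2, sin x ^ (n + 2) = (n + 1) / (n + 2) * ∫ x in 0..π / 2, sin x ^ n := by
  simp [integral_sin_pow]

theorem integral_sin_pow_succ_le_zero_pi_div_two (n : ℕ) :
    ∫ x in 0..π / 2, sin x ^ (n + 1) ≤ ∫ x in 0..π / 2, sin x ^ n := by
  refine integral_mono_on (by positivity) ((continuous_sin.pow _).intervalIntegrable _ _)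
    ((continuous_sin.pow _).intervalIntegrable _ _) fun x hx => ?_
  have hx' : x ∈ Icc 0 π := ⟨hx.1, hx.2.trans (by linarith [pi_pos])⟩
  exact pow_le_pow_of_le_one (sin_nonneg_of_mem_Icc hx') (sin_le_one x) n.le_succ

theorem integral_sin_pow_mul_integral_sin_pow_succ_zero_pi_div_two (n : ℕ) :
    (n + 1) * ((∫ x in 0..π / 2, sin x ^ n) * ∫ x in 0..π / 2, sin x ^ (n + 1)) = π / 2 := by
  induction n with
  | zero => simp
  | succ n ih =>
    rw [integral_sin_pow_succ_succ_zero_pi_div_two]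
    push_cast
    field_simp
    linear_combination (2 * (n : ℝ) + 4) * ih

theorem sqrt_pi_div_le_integral_sin_pow (n : ℕ) :
    √(π / (2 * (n + 1))) ≤ ∫ x in 0..π / 2, sin x ^ n := by
  set I := ∫ x in 0..π / 2, sin x ^ n
  have hI : 0 ≤ I := integral_nonneg (by positivity) fun x hx =>
    pow_nonneg (sin_nonneg_of_mem_Icc ⟨hx.1, hx.2.trans (by linarith [pi_pos])⟩) n
  have hprod : π / (2 * (n + 1)) = I * ∫ x in 0..π / 2, sin x ^ (n + 1) := by
    field_simp
    linear_combination -2 * integral_sin_pow_mul_integral_sin_pow_succ_zero_pi_div_two n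
  rw [hprod]
  exact (sqrt_le_sqrt (mul_le_mul_of_nonneg_left (integral_sin_pow_succ_le_zero_pi_div_two n)
    hI)).trans_eq (sqrt_mul_self hI)

theorem pow_div_pow_le_inv_one_add_div_pow {s ρ : ℝ} (hs : 0 < s) (hs1 : s ≤ 1) (hρ : 0 ≤ ρ)
    (m : ℕ) : s ^ m / (1 + ρ) ^ m ≤ ((1 + ρ / s) ^ m)⁻¹ := by
  rw [← div_pow, ← inv_pow, one_add_div hs.ne', inv_div]
  gcongr

theorem integrableOn_inv_one_add_div_sin_sq_pow {ρ : ℝ} (hρ : 0 ≤ ρ) (m : ℕ) {s : Set ℝ}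
    (hs : volume s < ⊤) : IntegrableOn (fun θ => ((1 + ρ / sin θ ^ 2) ^ m)⁻¹) s := by
  refine IntegrableOn.of_bound hs (by fun_prop : Measurable _).aestronglyMeasurable 1
    (ae_of_all _ fun θ => ?_)
  have h1 : 1 ≤ (1 + ρ / sin θ ^ 2) ^ m := one_le_pow₀ (le_add_of_nonneg_right (by positivity))
  rw [norm_inv, norm_of_nonneg (zero_le_one.trans h1)]
  exact inv_le_one_of_one_le₀ h1

theorem integral_lower_bound_general (ρ : ℝ) (hρ : 0 < ρ) (m : ℕ) :
    (∫ θ in Set.Icc (0 : ℝ) (Real.pi / 2),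
        if θ = 0 then 0 else ((1 + ρ / Real.sin θ ^ 2) ^ m)⁻¹) ≥
      Real.sqrt Real.pi / (2 * Real.sqrt ((m : ℝ) + 1 / 2)) * ((1 + ρ) ^ m)⁻¹ := by
  have hconst : √π / (2 * √((m : ℝ) + 1 / 2)) = √(π / (2 * ((2 * m : ℕ) + 1))) := by
    rw [show π / (2 * ((2 * m : ℕ) + 1)) = π / (2 ^ 2 * ((m : ℝ) + 1 / 2)) by push_cast; ring,
      sqrt_div' _ (by positivity), sqrt_mul (by positivity), sqrt_sq zero_le_two]
  have hpointwise : ∀ θ ∈ Ioc 0 (π / 2),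
      (sin θ ^ 2) ^ m / (1 + ρ) ^ m ≤ ((1 + ρ / sin θ ^ 2) ^ m)⁻¹ := fun θ hθ =>
    pow_div_pow_le_inv_one_add_div_pow
      (pow_pos (sin_pos_of_pos_of_lt_pi hθ.1 (hθ.2.trans_lt (by linarith [pi_pos]))) 2)
      (sin_sq_le_one θ) hρ.le m
  rw [ge_iff_le, hconst, integral_Icc_eq_integral_Ioc,
    setIntegral_congr_fun measurableSet_Ioc fun θ hθ => if_neg hθ.1.ne']
  calc √(π / (2 * ((2 * m : ℕ) + 1))) * ((1 + ρ) ^ m)⁻¹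
      ≤ (∫ θ in 0..π / 2, sin θ ^ (2 * m)) * ((1 + ρ) ^ m)⁻¹ := by
        gcongr
        exact sqrt_pi_div_le_integral_sin_pow (2 * m)
    _ = ∫ θ in Ioc 0 (π / 2), (sin θ ^ 2) ^ m / (1 + ρ) ^ m := by
        rw [integral_of_le pi_div_two_pos.le, MeasureTheory.integral_div]
        simp only [pow_mul, div_eq_mul_inv]
    _ ≤ ∫ θ in Ioc 0 (π / 2), ((1 + ρ / sin θ ^ 2) ^ m)⁻¹ :=
        setIntegral_mono_on (Continuous.integrableOn_Ioc (by fun_prop))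
        (integrableOn_inv_one_add_div_sin_sq_pow hρ.le m measure_Ioc_lt_top) measurableSet_Ioc
        hpointwise

/-- For `ρ > 0` and `m ≥ 1`:
`∫_0^{π/2} (1 + ρ/sin²θ)^{-m} dθ ≥ (√π / (2√(m + 1/2))) (1 + ρ)^{-m}`,
where the integrand is extended by the value `0` at `θ = 0`. -/
theorem integral_lower_bound (ρ : ℝ) (hρ : 0 < ρ) (m : ℕ) (hm : 1 ≤ m) :
    (∫ θ in Set.Icc (0 : ℝ) (Real.pi / 2),
        if θ = 0 then 0 else ((1 + ρ / Real.sin θ ^ 2) ^ m)⁻¹) ≥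
      Real.sqrt Real.pi / (2 * Real.sqrt ((m : ℝ) + 1 / 2)) * ((1 + ρ) ^ m)⁻¹ :=
  integral_lower_bound_general ρ hρ m
end

section
/- Let μ be the standard Gaussian measure on ℝ^N (the product of N copies of the real Gaussian distribution with mean 0 and variance 1). Then for every real a > 0, ∫ Q(a‖g‖) dμ(g) = (1/π) ∫_0^{π/2} (1 + a²/sin²θ)^{-N/2} dθ. -/
/-!
Craig's formula `Q x = (1/π) ∫₀^{π/2} exp (-x² / (2 sin² θ)) dθ` for `x ≥ 0` comes from computing
the Gaussian mass of the half-plane `{v > x}` in polar coordinates: along the ray of angle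
`θ ∈ (0, π)` the half-plane starts at radius `x / sin θ`, and `∫_ρ^∞ r e^{-r²/2} dr = e^{-ρ²/2}`.
Substituting `x = a‖g‖` turns the integrand into `exp (-c ‖g‖² / 2)` with `c = a² / sin² θ`, whose
Gaussian average factorises over the coordinates into `(1 + c)^{-N/2}`; Fubini swaps the two
integrals.
-/

open Real MeasureTheory ProbabilityTheory

open Set Filter Topology

lemma integrable_exp_of_nonpos {α : Type*} [MeasurableSpace α] {μ : Measure α}
    [IsFiniteMeasure μ] {f : α → ℝ} (hf : Measurable f) (hf_nonpos : ∀ x, f x ≤ 0) :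
    Integrable (fun x => rexp (f x)) μ :=
  .of_bound hf.exp.aestronglyMeasurable 1 <| ae_of_all _ fun x => by
    rw [norm_of_nonneg (exp_pos _).le, exp_le_one_iff]
    exact hf_nonpos x

theorem intervalIntegral.integral_eq_two_mul_of_symm {f : ℝ → ℝ} {a b : ℝ}
    (hf : IntervalIntegrable f volume a b) (h_symm : ∀ x, f (a + b - x) = f x) :
    ∫ x in a..b, f x = 2 * ∫ x in a..(a + b) / 2, f x := by
  have hmid : (a + b) / 2 ∈ uIcc a b := by
    rcases le_total a b with h | h
    · exact mem_uIcc.2 (.inl ⟨by linarith, by linarith⟩)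
    · exact mem_uIcc.2 (.inr ⟨by linarith, by linarith⟩)
  have h_upper : ∫ x in (a + b) / 2..b, f x = ∫ x in a..(a + b) / 2, f x := by
    calc ∫ x in (a + b) / 2..b, f x = ∫ x in (a + b) / 2..b, f (a + b - x) := by
          simp_rw [h_symm]
      _ = ∫ x in a..(a + b) / 2, f x := by
          rw [intervalIntegral.integral_comp_sub_left f (a + b)]
          congr 1 <;> ring
  rw [← intervalIntegral.integral_add_adjacent_intervals
    (hf.mono_set (uIcc_subset_uIcc_left hmid)) (hf.mono_set (uIcc_subset_uIcc_right hmid)),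
    h_upper, two_mul]

lemma hasDerivAt_neg_exp_neg_sq_div_two (r : ℝ) :
    HasDerivAt (fun r => -rexp (-r ^ 2 / 2)) (r * rexp (-r ^ 2 / 2)) r := by
  have h : HasDerivAt (fun r : ℝ => -r ^ 2 / 2) (-r) r :=
    ((hasDerivAt_pow 2 r).neg.div_const 2).congr_deriv (by ring)
  exact h.exp.neg.congr_deriv (by ring)

lemma tendsto_neg_exp_neg_sq_div_two_atTop :
    Tendsto (fun r : ℝ => -rexp (-r ^ 2 / 2)) atTop (𝓝 0) := by
  have h := tendsto_exp_neg_atTop_nhds_zero.comp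
    ((tendsto_pow_atTop two_ne_zero).atTop_div_const two_pos)
  simpa [Function.comp_def, neg_div] using h.neg

lemma integral_Ioi_mul_exp_neg_sq_div_two {c : ℝ} (hc : 0 ≤ c) :
    ∫ r in Ioi c, r * rexp (-r ^ 2 / 2) = rexp (-c ^ 2 / 2) := by
  rw [integral_Ioi_of_hasDerivAt_of_nonneg' (fun r _ => hasDerivAt_neg_exp_neg_sq_div_two r)
    (fun r hr => mul_nonneg (hc.trans (le_of_lt hr)) (exp_pos _).le)
    tendsto_neg_exp_neg_sq_div_two_atTop]
  ring

lemma integrableOn_Ioi_mul_exp_neg_sq_div_two :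
    IntegrableOn (fun r : ℝ => r * rexp (-r ^ 2 / 2)) (Ioi 0) :=
  integrableOn_Ioi_deriv_of_nonneg' (fun r _ => hasDerivAt_neg_exp_neg_sq_div_two r)
    (fun _ hr => mul_nonneg (le_of_lt hr) (exp_pos _).le) tendsto_neg_exp_neg_sq_div_two_atTop

lemma integral_exp_neg_sq_div_two : ∫ v : ℝ, rexp (-v ^ 2 / 2) = √(2 * π) := by
  have h : (fun v : ℝ => rexp (-v ^ 2 / 2)) = fun v => rexp (-(1 / 2) * v ^ 2) := by
    ext v; ring_nf
  rw [h, integral_gaussian]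
  congr 1
  ring

lemma integral_exp_neg_sq_div_two_mul_indicator_Ioi (x : ℝ) :
    ∫ p : ℝ × ℝ, rexp (-p.1 ^ 2 / 2) * (Ioi x).indicator (fun v => rexp (-v ^ 2 / 2)) p.2
      = √(2 * π) * ∫ v in Ioi x, rexp (-v ^ 2 / 2) := by
  rw [Measure.volume_eq_prod, integral_prod_mul (fun u => rexp (-u ^ 2 / 2))
    ((Ioi x).indicator fun v => rexp (-v ^ 2 / 2)), integral_exp_neg_sq_div_two,
    integral_indicator measurableSet_Ioi]

lemma integral_exp_neg_sq_div_two_mul_indicator_Ioi_eq_polar (x : ℝ) :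
    ∫ p : ℝ × ℝ, rexp (-p.1 ^ 2 / 2) * (Ioi x).indicator (fun v => rexp (-v ^ 2 / 2)) p.2
      = ∫ θ in Ioo (-π) π, ∫ r in Ioi 0,
          if x < r * sin θ then r * rexp (-r ^ 2 / 2) else 0 := by
  set G : ℝ × ℝ → ℝ := fun p => if x < p.1 * sin p.2 then p.1 * rexp (-p.1 ^ 2 / 2) else 0
  have h_polar : ∀ p : ℝ × ℝ, p.1 • (rexp (-(polarCoord.symm p).1 ^ 2 / 2) *
      (Ioi x).indicator (fun v => rexp (-v ^ 2 / 2)) (polarCoord.symm p).2) = G p := by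
    rintro ⟨r, θ⟩
    simp only [polarCoord_symm_apply, smul_eq_mul, G]
    by_cases h : x < r * sin θ
    · rw [indicator_of_mem (mem_Ioi.2 h), if_pos h, ← exp_add]
      congr 2
      linear_combination (-r ^ 2 / 2) * cos_sq_add_sin_sq θ
    · rw [indicator_of_notMem (notMem_Ioi.2 (not_lt.1 h)), if_neg h, mul_zero, mul_zero]
  have hG : Integrable G ((volume.restrict (Ioi 0)).prod (volume.restrict (Ioo (-π) π))) := by
    refine (integrableOn_Ioi_mul_exp_neg_sq_div_two.norm.mul_prod
      (integrableOn_const (C := (1 : ℝ)) measure_Ioo_lt_top.ne)).mono'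
      (Measurable.ite (measurableSet_lt measurable_const (by fun_prop)) (by fun_prop)
        measurable_const).aestronglyMeasurable (ae_of_all _ fun p => ?_)
    simp only [G, mul_one]
    split_ifs
    · rfl
    · simp only [norm_zero, norm_mul, norm_nonneg, mul_nonneg]
  rw [← integral_comp_polarCoord_symm]
  simp_rw [h_polar]
  rw [polarCoord_target, Measure.volume_eq_prod, ← Measure.prod_restrict,
    integral_prod_symm G hG]

lemma integral_Ioi_ite_lt_mul_sin {x : ℝ} (hx : 0 ≤ x) (θ : ℝ) :
    ∫ r in Ioi 0, (if x < r * sin θ then r * rexp (-r ^ 2 / 2) else 0)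
      = if 0 < sin θ then rexp (-(x / sin θ) ^ 2 / 2) else 0 := by
  split_ifs with hsin
  · have h_ind : ∀ r, (if x < r * sin θ then r * rexp (-r ^ 2 / 2) else 0)
        = (Ioi (x / sin θ)).indicator (fun r => r * rexp (-r ^ 2 / 2)) r := fun r => by
      simp only [indicator_apply, mem_Ioi, div_lt_iff₀ hsin]
    have hx' : 0 ≤ x / sin θ := div_nonneg hx hsin.le
    simp_rw [h_ind]
    rw [setIntegral_indicator measurableSet_Ioi, Ioi_inter_Ioi, max_eq_right hx',
      integral_Ioi_mul_exp_neg_sq_div_two hx']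
  · refine (setIntegral_congr_fun measurableSet_Ioi fun r hr => if_neg ?_).trans
      (integral_zero _ _)
    have : r * sin θ ≤ 0 := mul_nonpos_of_nonneg_of_nonpos (le_of_lt hr) (not_lt.1 hsin)
    linarith

theorem gaussQ_eq_integral_exp_div_sin_sq {x : ℝ} (hx : 0 ≤ x) :
    gaussQ x = 1 / π * ∫ θ in Ioc 0 (π / 2), rexp (-(x / sin θ) ^ 2 / 2) := by
  set E : ℝ → ℝ := fun θ => rexp (-(x / sin θ) ^ 2 / 2)
  have hE_int : IntervalIntegrable E volume 0 π := by
    rw [intervalIntegrable_iff_integrableOn_Ioc_of_le pi_pos.le]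
    have : IsFiniteMeasure (volume.restrict (Ioc 0 π)) := isFiniteMeasure_restrict.2 (by simp)
    exact integrable_exp_of_nonpos (by fun_prop) fun θ => by
      have := sq_nonneg (x / sin θ)
      linarith
  have h_sin_pos : ∀ θ ∈ Ioo (-π) π, 0 < sin θ ↔ θ ∈ Ioo 0 π := fun θ hθ =>
    ⟨fun h => ⟨not_le.1 fun h0 => (sin_nonpos_of_nonpos_of_neg_pi_le h0 hθ.1.le).not_gt h, hθ.2⟩,
      sin_pos_of_mem_Ioo⟩
  have h_upper_half : ∫ θ in Ioo (-π) π, (if 0 < sin θ then E θ else 0) = ∫ θ in 0..π, E θ := by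
    rw [setIntegral_congr_fun (g := (Ioo 0 π).indicator E) measurableSet_Ioo fun θ hθ => by
        simp only [h_sin_pos θ hθ, indicator_apply],
      setIntegral_indicator measurableSet_Ioo,
      inter_eq_right.2 (Ioo_subset_Ioo (by linarith [pi_pos]) le_rfl),
      intervalIntegral.integral_of_le pi_pos.le, integral_Ioc_eq_integral_Ioo]
  have h_two_quadrants : √(2 * π) * ∫ u in Ioi x, rexp (-u ^ 2 / 2)
      = 2 * ∫ θ in Ioc 0 (π / 2), E θ := by
    rw [← integral_exp_neg_sq_div_two_mul_indicator_Ioi,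
      integral_exp_neg_sq_div_two_mul_indicator_Ioi_eq_polar]
    simp_rw [integral_Ioi_ite_lt_mul_sin hx]
    rw [h_upper_half, intervalIntegral.integral_eq_two_mul_of_symm hE_int fun θ => by
        simp only [E, zero_add, sin_pi_sub],
      zero_add, intervalIntegral.integral_of_le (by positivity)]
  have h_sqrt : √(2 * π) ^ 2 = 2 * π := sq_sqrt (by positivity)
  calc gaussQ x = √(2 * π) * (∫ u in Ioi x, rexp (-u ^ 2 / 2)) / √(2 * π) ^ 2 := by
        rw [gaussQ]; field_simp
    _ = 1 / π * ∫ θ in Ioc 0 (π / 2), E θ := by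
        rw [h_two_quadrants, h_sqrt]; field_simp

lemma integral_exp_neg_mul_sq_div_two_gaussianReal {c : ℝ} (hc : 0 ≤ c) :
    ∫ x, rexp (-(c * x ^ 2) / 2) ∂(gaussianReal 0 1) = (1 + c) ^ (-(1 : ℝ) / 2) := by
  have h_density : ∀ x : ℝ, gaussianPDFReal 0 1 x • rexp (-(c * x ^ 2) / 2)
      = (√(2 * π))⁻¹ * rexp (-((1 + c) / 2) * x ^ 2) := fun x => by
    rw [gaussianPDFReal, smul_eq_mul, mul_assoc, ← exp_add]
    push_cast
    ring_nf
  have h_sqrt : √(π / ((1 + c) / 2)) = √(2 * π) / √(1 + c) := by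
    rw [← sqrt_div (by positivity)]
    congr 1
    field_simp
  rw [integral_gaussianReal_eq_integral_smul one_ne_zero]
  simp_rw [h_density]
  rw [integral_const_mul, integral_gaussian, h_sqrt, neg_div, rpow_neg (by linarith),
    ← sqrt_eq_rpow]
  field_simp

lemma integral_exp_neg_mul_sum_sq_div_two_pi_gaussianReal {ι : Type*} [Fintype ι] {c : ℝ}
    (hc : 0 ≤ c) :
    ∫ g : ι → ℝ, rexp (-(c * ∑ i, g i ^ 2) / 2) ∂(Measure.pi fun _ => gaussianReal 0 1)
      = (1 + c) ^ (-(Fintype.card ι : ℝ) / 2) := by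
  have h_prod : ∀ g : ι → ℝ, rexp (-(c * ∑ i, g i ^ 2) / 2) = ∏ i, rexp (-(c * g i ^ 2) / 2) :=
    fun g => by rw [← exp_sum, Finset.mul_sum, ← Finset.sum_neg_distrib, Finset.sum_div]
  simp_rw [h_prod]
  rw [integral_fintype_prod_eq_pow (fun x => rexp (-(c * x ^ 2) / 2)),
    integral_exp_neg_mul_sq_div_two_gaussianReal hc,
    ← rpow_natCast, ← rpow_mul (by linarith)]
  ring_nf

/-- Averaging the Q-function of `a‖g‖` over a standard Gaussian vector `g` gives a
Craig-type single-integral representation. -/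
theorem gaussian_avg_Q_eq (N : ℕ) (a : ℝ) (ha : 0 < a) :
    ∫ g : Fin N → ℝ, gaussQ (a * Real.sqrt (∑ i, g i ^ 2))
        ∂(Measure.pi fun _ : Fin N => gaussianReal 0 1) =
      (1 / Real.pi) * ∫ θ in Set.Icc (0 : ℝ) (Real.pi / 2),
        if θ = 0 then 0 else ((1 + a ^ 2 / Real.sin θ ^ 2) ^ (-(N : ℝ) / 2)) := by
  have h_craig : ∀ g : Fin N → ℝ, gaussQ (a * √(∑ i, g i ^ 2))
      = 1 / π * ∫ θ in Ioc 0 (π / 2), rexp (-(a ^ 2 / sin θ ^ 2 * ∑ i, g i ^ 2) / 2) :=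
    fun g => by
      rw [gaussQ_eq_integral_exp_div_sin_sq (by positivity)]
      congr 2 with θ
      rw [div_pow, mul_pow, sq_sqrt (by positivity), div_mul_eq_mul_div]
  have h_int : Integrable (Function.uncurry fun (g : Fin N → ℝ) θ =>
      rexp (-(a ^ 2 / sin θ ^ 2 * ∑ i, g i ^ 2) / 2))
      ((Measure.pi fun _ => gaussianReal 0 1).prod (volume.restrict (Ioc 0 (π / 2)))) :=
    integrable_exp_of_nonpos (by fun_prop) fun p => by
      have : 0 ≤ a ^ 2 / sin p.2 ^ 2 * ∑ i, p.1 i ^ 2 := by positivity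
      linarith
  simp_rw [h_craig]
  rw [integral_const_mul, integral_integral_swap h_int]
  have h_inner : ∀ θ, ∫ g : Fin N → ℝ, rexp (-(a ^ 2 / sin θ ^ 2 * ∑ i, g i ^ 2) / 2)
      ∂(Measure.pi fun _ => gaussianReal 0 1) = (1 + a ^ 2 / sin θ ^ 2) ^ (-(N : ℝ) / 2) :=
    fun θ => by
      simpa using integral_exp_neg_mul_sum_sq_div_two_pi_gaussianReal (ι := Fin N)
        (c := a ^ 2 / sin θ ^ 2) (by positivity)
  simp_rw [h_inner]
  rw [integral_Icc_eq_integral_Ioc]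
  congr 1
  exact setIntegral_congr_fun measurableSet_Ioc fun θ hθ => (if_neg hθ.1.ne').symm
end
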